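/- Let φ : (B,β) → (A,α) be a morphism of Ω-valued sets. Define, for a strict relation τ on (B,β), (∃_φ τ)(a) := ⋁_{b∈B} φ(b,a) ∧ τ(b) and (∀_φ τ)(a) := α(a,a) ∧ ⋀_{b∈B} (φ(b,a) ⇒ τ(b)), and for a strict relation σ on (A,α), (φ*σ)(b) := ⋁_{a∈A} φ(b,a) ∧ σ(a). Then ∃_φ τ and ∀_φ τ are strict relations on (A,α), and ∃_φ is left adjoint to φ* while ∀_φ is right adjoint to φ*: ∃_φ τ ≤ σ ⟺ τ ≤ φ*σ, and φ*σ ≤ τ ⟺ σ ≤ ∀_φ τ (pointwise order). -/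

import Mathlib

variable {Ω A B C : Type*}

/-- An `Ω`-valued set structure: a symmetric, transitive `Ω`-valued equality. -/
structure IsOSet [Order.Frame Ω] (α : A → A → Ω) : Prop where
  symm : ∀ a b, α a b = α b a
  trans : ∀ a b c, α a b ⊓ α b c ≤ α a c

/-- A morphism of `Ω`-valued sets, as a functional relation. -/
structure IsMorphism [Order.Frame Ω] (α : A → A → Ω) (β : B → B → Ω)
    (φ : A → B → Ω) : Prop where
  ext : ∀ a a' b b', α a a' ⊓ φ a b ⊓ β b b' ≤ φ a' b'
  sv : ∀ a b b', φ a b ⊓ φ a b' ≤ β b b'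
  total : ∀ a, α a a = ⨆ b, φ a b

/-- A singleton of an Ω-valued set (A,α). -/
def IsSingleton [Order.Frame Ω] (α : A → A → Ω) (σ : A → Ω) : Prop :=
  (∀ a a', σ a ⊓ α a a' ≤ σ a') ∧ (∀ a a', σ a ⊓ σ a' ≤ α a a')

/-- A strict relation on an Ω-valued set (A,α). -/
def IsStrict [Order.Frame Ω] (α : A → A → Ω) (σ : A → Ω) : Prop :=
  (∀ a a', σ a ⊓ α a a' ≤ σ a') ∧ (∀ a, σ a ≤ α a a)

/-!
The adjunctions come from unit and counit inequalities together with monotonicity of the three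
operations: `τ ≤ φ* ∃_φ τ` because `β(b,b) = ⋁_a φ(b,a)` bounds `τ`, `∃_φ φ* σ ≤ σ` because `φ` is
single-valued and `σ` extensional, `φ* ∀_φ τ ≤ τ` is modus ponens, and `σ ≤ ∀_φ φ* σ` because
`σ(a) ≤ α(a,a)`.
-/

section

variable [Order.Frame Ω] {α : A → A → Ω} {β : B → B → Ω} {φ : B → A → Ω}

def existsImage (φ : B → A → Ω) (τ : B → Ω) (a : A) : Ω := ⨆ b, φ b a ⊓ τ b

def forallImage (α : A → A → Ω) (φ : B → A → Ω) (τ : B → Ω) (a : A) : Ω :=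
  α a a ⊓ ⨅ b, (φ b a ⇨ τ b)

def pullback (φ : B → A → Ω) (σ : A → Ω) (b : B) : Ω := ⨆ a, φ b a ⊓ σ a

theorem IsOSet.le_diag_right (hα : IsOSet α) (a a' : A) : α a a' ≤ α a' a' := by
  simpa only [hα.symm a a', inf_idem] using hα.trans a' a a'

theorem existsImage_mono {τ τ' : B → Ω} (h : τ ≤ τ') : existsImage φ τ ≤ existsImage φ τ' :=
  fun _ => iSup_mono fun b => inf_le_inf_left _ (h b)

theorem forallImage_mono {τ τ' : B → Ω} (h : τ ≤ τ') :
    forallImage α φ τ ≤ forallImage α φ τ' :=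
  fun _ => inf_le_inf_left _ (iInf_mono fun b => himp_le_himp_left (h b))

theorem pullback_mono {σ σ' : A → Ω} (h : σ ≤ σ') : pullback φ σ ≤ pullback φ σ' :=
  fun _ => iSup_mono fun a => inf_le_inf_left _ (h a)

theorem pullback_forallImage_le (τ : B → Ω) : pullback φ (forallImage α φ τ) ≤ τ :=
  fun b => iSup_le fun _ =>
    (inf_le_inf_left _ (inf_le_right.trans (iInf_le _ b))).trans inf_himp_le

theorem le_forallImage_pullback {σ : A → Ω} (hσ : IsStrict α σ) :
    σ ≤ forallImage α φ (pullback φ σ) :=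
  fun a => le_inf (hσ.2 a) (le_iInf fun b => le_himp_iff.mpr <|
    inf_comm (σ a) _ ▸ le_iSup (fun a' => φ b a' ⊓ σ a') a)

namespace IsMorphism

theorem le_diag_left (hφ : IsMorphism β α φ) (b : B) (a : A) : φ b a ≤ β b b :=
  hφ.total b ▸ le_iSup (φ b) a

theorem le_diag_right (hφ : IsMorphism β α φ) (b : B) (a : A) : φ b a ≤ α a a :=
  (inf_idem _).ge.trans (hφ.sv b a a)

theorem ext_right (hφ : IsMorphism β α φ) (b : B) (a a' : A) : φ b a ⊓ α a a' ≤ φ b a' :=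
  (inf_le_inf_right _ (le_inf (hφ.le_diag_left b a) le_rfl)).trans (hφ.ext b b a a')

theorem isStrict_existsImage (hφ : IsMorphism β α φ) (τ : B → Ω) :
    IsStrict α (existsImage φ τ) := by
  refine ⟨fun a a' => ?_, fun a => iSup_le fun b => inf_le_left.trans (hφ.le_diag_right b a)⟩
  rw [existsImage, iSup_inf_eq]
  refine iSup_mono fun b => ?_
  calc φ b a ⊓ τ b ⊓ α a a' = φ b a ⊓ α a a' ⊓ τ b := inf_right_comm _ _ _
    _ ≤ φ b a' ⊓ τ b := inf_le_inf_right _ (hφ.ext_right b a a')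

theorem isStrict_forallImage (hφ : IsMorphism β α φ) (hα : IsOSet α) (τ : B → Ω) :
    IsStrict α (forallImage α φ τ) := by
  refine ⟨fun a a' => le_inf ?_ (le_iInf fun b => le_himp_iff.mpr ?_), fun a => inf_le_left⟩
  · exact inf_le_right.trans (hα.le_diag_right a a')
  · have hφb : α a a' ⊓ φ b a' ≤ φ b a := by
      rw [hα.symm, inf_comm]
      exact hφ.ext_right b a' a
    calc forallImage α φ τ a ⊓ α a a' ⊓ φ b a' ≤ (φ b a ⇨ τ b) ⊓ φ b a :=
          le_inf (inf_le_left.trans (inf_le_left.trans (inf_le_right.trans (iInf_le _ b))))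
            (inf_le_inf_right _ inf_le_right |>.trans hφb)
      _ ≤ τ b := himp_inf_le

theorem le_pullback_existsImage (hφ : IsMorphism β α φ) {τ : B → Ω} (hτ : IsStrict β τ) :
    τ ≤ pullback φ (existsImage φ τ) := fun b =>
  calc τ b ≤ β b b ⊓ τ b := le_inf (hτ.2 b) le_rfl
    _ = ⨆ a, φ b a ⊓ τ b := by rw [hφ.total b, iSup_inf_eq]
    _ ≤ pullback φ (existsImage φ τ) b :=
      iSup_mono fun a => le_inf inf_le_left (le_iSup (fun b' => φ b' a ⊓ τ b') b)

theorem existsImage_pullback_le (hφ : IsMorphism β α φ) {σ : A → Ω} (hσ : IsStrict α σ) :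
    existsImage φ (pullback φ σ) ≤ σ := fun a =>
  iSup_le fun b => by
    rw [pullback, inf_iSup_eq]
    refine iSup_le fun a' => ?_
    calc φ b a ⊓ (φ b a' ⊓ σ a') ≤ σ a' ⊓ α a' a :=
          le_inf (inf_le_right.trans inf_le_right)
            (le_inf (inf_le_right.trans inf_le_left) inf_le_left |>.trans (hφ.sv b a' a))
      _ ≤ σ a := hσ.1 a' a

theorem existsImage_le_iff_le_pullback (hφ : IsMorphism β α φ) {τ : B → Ω} {σ : A → Ω}
    (hτ : IsStrict β τ) (hσ : IsStrict α σ) :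
    existsImage φ τ ≤ σ ↔ τ ≤ pullback φ σ :=
  ⟨fun h => (hφ.le_pullback_existsImage hτ).trans (pullback_mono h),
    fun h => (existsImage_mono h).trans (hφ.existsImage_pullback_le hσ)⟩

theorem pullback_le_iff_le_forallImage {τ : B → Ω} {σ : A → Ω} (hσ : IsStrict α σ) :
    pullback φ σ ≤ τ ↔ σ ≤ forallImage α φ τ :=
  ⟨fun h => (le_forallImage_pullback hσ).trans (forallImage_mono h),
    fun h => (pullback_mono h).trans (pullback_forallImage_le τ)⟩

end IsMorphism

end

theorem stmt15_general [Order.Frame Ω] (α : A → A → Ω) (β : B → B → Ω)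
    (hα : IsOSet α)
    (φ : B → A → Ω) (hφ : IsMorphism β α φ) :
    (∀ τ : B → Ω, IsStrict β τ → IsStrict α (fun a => ⨆ b, φ b a ⊓ τ b)) ∧
    (∀ τ : B → Ω, IsStrict β τ →
      IsStrict α (fun a => α a a ⊓ ⨅ b, (φ b a ⇨ τ b))) ∧
    (∀ (τ : B → Ω) (σ : A → Ω), IsStrict β τ → IsStrict α σ →
      ((∀ a, (⨆ b, φ b a ⊓ τ b) ≤ σ a) ↔
        ∀ b, τ b ≤ ⨆ a, φ b a ⊓ σ a)) ∧
    (∀ (τ : B → Ω) (σ : A → Ω), IsStrict β τ → IsStrict α σ →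
      ((∀ b, (⨆ a, φ b a ⊓ σ a) ≤ τ b) ↔
        ∀ a, σ a ≤ α a a ⊓ ⨅ b, (φ b a ⇨ τ b))) := by
  exact ⟨fun τ _ => hφ.isStrict_existsImage τ,
    fun τ _ => hφ.isStrict_forallImage hα τ,
    fun _ _ hτ hσ => hφ.existsImage_le_iff_le_pullback hτ hσ,
    fun _ _ _ hσ => IsMorphism.pullback_le_iff_le_forallImage hσ⟩

/-- ∃_φ is left adjoint and ∀_φ is right adjoint to the pullback φ* of
strict relations along a morphism φ : (B,β) → (A,α). -/
theorem stmt15 [Order.Frame Ω] (α : A → A → Ω) (β : B → B → Ω)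
    (hα : IsOSet α) (hβ : IsOSet β)
    (φ : B → A → Ω) (hφ : IsMorphism β α φ) :
    (∀ τ : B → Ω, IsStrict β τ → IsStrict α (fun a => ⨆ b, φ b a ⊓ τ b)) ∧
    (∀ τ : B → Ω, IsStrict β τ →
      IsStrict α (fun a => α a a ⊓ ⨅ b, (φ b a ⇨ τ b))) ∧
    (∀ (τ : B → Ω) (σ : A → Ω), IsStrict β τ → IsStrict α σ →
      ((∀ a, (⨆ b, φ b a ⊓ τ b) ≤ σ a) ↔
        ∀ b, τ b ≤ ⨆ a, φ b a ⊓ σ a)) ∧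
    (∀ (τ : B → Ω) (σ : A → Ω), IsStrict β τ → IsStrict α σ →
      ((∀ b, (⨆ a, φ b a ⊓ σ a) ≤ τ b) ↔
        ∀ a, σ a ≤ α a a ⊓ ⨅ b, (φ b a ⇨ τ b))) :=
  stmt15_general α β hα φ hφ
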